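/- arXiv:1210.1669 — 3 statements merged into one kernel-verified Lean document; each statement's English description precedes it below -/
import Mathlib

section
/- The quantum dimension solution of type D_r satisfies z^{(a)}_{k+j} = 0 for every a ∈ I = {1,…,r} and every integer j with 1 ≤ j ≤ h−1. -/
/-- Orthogonal coordinates `u_i(λ)` of `λ + ρ` for the weight
`λ = λ_1 ω_1 + ⋯ + λ_r ω_r` of `D_r` given in fundamental-weight coordinates. -/
noncomputable def uCoord (r : ℕ) (lam : ℕ → ℤ) (i : ℕ) : ℝ :=
  if i = r then ((lam r : ℝ) - (lam (r - 1) : ℝ)) / 2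
  else (∑ j ∈ Finset.Icc i (r - 2), (lam j : ℝ))
      + ((lam (r - 1) : ℝ) + (lam r : ℝ)) / 2 + ((r : ℝ) - (i : ℝ))

/-- The level-`k` quantum dimension of the weight `λ` of `D_r`
(`h = 2r - 2` is the Coxeter number), given by the product over the
positive roots `e_i - e_j`, `e_i + e_j` (`1 ≤ i < j ≤ r`). -/
noncomputable def qdimD (r k : ℕ) (lam : ℕ → ℤ) : ℝ :=
  ∏ p ∈ (Finset.Icc 1 r ×ˢ Finset.Icc 1 r).filter (fun p => p.1 < p.2),
    (Real.sin (Real.pi * (uCoord r lam p.1 - uCoord r lam p.2) / (2 * (r : ℝ) - 2 + (k : ℝ)))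
      * Real.sin (Real.pi * (uCoord r lam p.1 + uCoord r lam p.2) / (2 * (r : ℝ) - 2 + (k : ℝ))))
    / (Real.sin (Real.pi * ((p.2 : ℝ) - (p.1 : ℝ)) / (2 * (r : ℝ) - 2 + (k : ℝ)))
      * Real.sin (Real.pi * (2 * (r : ℝ) - (p.1 : ℝ) - (p.2 : ℝ)) / (2 * (r : ℝ) - 2 + (k : ℝ))))

/-- The quantum dimension solution `z^{(a)}_m` of the `Q`-system of type `D_r`:
the specialization `Q^{(a)}_m(ρ/(h+k))` of the classical characters of the
Kirillov–Reshetikhin modules of type `D_r`. -/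
noncomputable def zD (r k a m : ℕ) : ℝ :=
  if a = r - 1 ∨ a = r then
    qdimD r k (fun j => if j = a then (m : ℤ) else 0)
  else if a % 2 = 1 then
    ∑ c ∈ (Fintype.piFinset (fun _ : Fin ((a + 1) / 2) => Finset.range (m + 1))).filter
        (fun c => ∑ i, c i = m),
      qdimD r k (fun j => ∑ i : Fin ((a + 1) / 2), if j = 2 * (i : ℕ) + 1 then (c i : ℤ) else 0)
  else
    ∑ c ∈ (Fintype.piFinset (fun _ : Fin (a / 2) => Finset.range (m + 1))).filter
        (fun c => ∑ i, c i ≤ m),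
      qdimD r k (fun j => ∑ i : Fin (a / 2), if j = 2 * (i : ℕ) + 2 then (c i : ℤ) else 0)

namespace S15
open Finset Real

variable {r k : ℕ}

lemma NN_pos (hr : 4 ≤ r) : (0:ℝ) < 2 * (r : ℝ) - 2 + (k : ℝ) := by
  have : (4:ℝ) ≤ (r:ℝ) := by exact_mod_cast hr
  have : (0:ℝ) ≤ (k:ℝ) := Nat.cast_nonneg k
  linarith

lemma sin_NN (hr : 4 ≤ r) :
    Real.sin (Real.pi * (2 * (r : ℝ) - 2 + (k : ℝ)) / (2 * (r : ℝ) - 2 + (k : ℝ))) = 0 := by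
  rw [mul_div_assoc, div_self (ne_of_gt (NN_pos hr)), mul_one, Real.sin_pi]

lemma qdim_zero (hr : 4 ≤ r) (lam : ℕ → ℤ) (p1 p2 : ℕ)
    (h1 : 1 ≤ p1) (h2 : p1 < p2) (h3 : p2 ≤ r)
    (h : uCoord r lam p1 - uCoord r lam p2 = 2 * (r : ℝ) - 2 + (k : ℝ) ∨
         uCoord r lam p1 + uCoord r lam p2 = 2 * (r : ℝ) - 2 + (k : ℝ)) :
    qdimD r k lam = 0 := by
  unfold qdimD
  apply Finset.prod_eq_zero (i := (p1, p2))
  · simp only [Finset.mem_filter, Finset.mem_product, Finset.mem_Icc]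
    exact ⟨⟨⟨h1, by omega⟩, ⟨by omega, h3⟩⟩, h2⟩
  · rcases h with h | h <;> rw [h] <;>
      simp [sin_NN hr]

/-- the swap function -/
def swF (w p : ℕ) : ℕ := if p = w then w + 1 else if p = w + 1 then w else p

lemma swF_invol (w p : ℕ) : swF w (swF w p) = p := by
  unfold swF; split_ifs <;> omega

lemma prod_swap_pairs (n w : ℕ) (hw1 : 1 ≤ w) (hw2 : w + 1 ≤ n) (y : ℕ → ℝ) :
    ∏ p ∈ (Finset.Icc 1 n ×ˢ Finset.Icc 1 n).filter (fun p => p.1 < p.2),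
      (y (swF w p.2) - y (swF w p.1))
    = - ∏ p ∈ (Finset.Icc 1 n ×ˢ Finset.Icc 1 n).filter (fun p => p.1 < p.2),
      (y p.2 - y p.1) := by
  set P := (Finset.Icc 1 n ×ˢ Finset.Icc 1 n).filter (fun p => p.1 < p.2) with hP
  have hmemP : ∀ q : ℕ × ℕ, q ∈ P ↔ (1 ≤ q.1 ∧ q.1 ≤ n) ∧ (1 ≤ q.2 ∧ q.2 ≤ n) ∧ q.1 < q.2 := by
    intro q
    simp only [hP, Finset.mem_filter, Finset.mem_product, Finset.mem_Icc]
    tauto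
  set φ : ℕ × ℕ → ℕ × ℕ := fun p => if p = (w, w+1) then p else (swF w p.1, swF w p.2) with hφ
  have hfac : ∀ p ∈ P, y (swF w p.2) - y (swF w p.1)
      = (if p = (w, w+1) then (-1:ℝ) else 1) * (y (φ p).2 - y (φ p).1) := by
    intro p hp
    by_cases h : p = (w, w+1)
    · subst h
      have e1 : swF w w = w + 1 := by unfold swF; split_ifs <;> omega
      have e2 : swF w (w + 1) = w := by unfold swF; split_ifs <;> omega
      simp only [hφ, if_pos rfl, e1, e2, ite_true]
      ring
    · simp only [hφ, if_neg h, one_mul]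
  have hφmem : ∀ p ∈ P, φ p ∈ P := by
    intro p hp
    by_cases h : p = (w, w+1)
    · simp only [hφ, if_pos h]; exact hp
    · rw [hmemP] at hp ⊢
      simp only [hφ, if_neg h]
      have hne : ¬ (p.1 = w ∧ p.2 = w + 1) := by
        intro ⟨a, b⟩; exact h (Prod.ext a b)
      obtain ⟨⟨a1, a2⟩, ⟨b1, b2⟩, hc⟩ := hp
      refine ⟨⟨?_, ?_⟩, ⟨?_, ?_⟩, ?_⟩ <;> (unfold swF; split_ifs <;> omega)
  have hφφ : ∀ p ∈ P, φ (φ p) = p := by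
    intro p hp
    by_cases h : p = (w, w+1)
    · simp only [hφ, if_pos h, if_pos h]
    · rw [hmemP] at hp
      have hne : ¬ (p.1 = w ∧ p.2 = w + 1) := by
        intro ⟨a, b⟩; exact h (Prod.ext a b)
      simp only [hφ, if_neg h]
      have h2 : ¬ ((swF w p.1, swF w p.2) = (w, w+1)) := by
        intro hc
        have e1 : swF w p.1 = w := congrArg Prod.fst hc
        have e2 : swF w p.2 = w + 1 := congrArg Prod.snd hc
        unfold swF at e1 e2
        split_ifs at e1 e2 <;> omega
      rw [if_neg h2, swF_invol, swF_invol]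
  calc ∏ p ∈ P, (y (swF w p.2) - y (swF w p.1))
      = ∏ p ∈ P, ((if p = (w, w+1) then (-1:ℝ) else 1) * (y (φ p).2 - y (φ p).1)) :=
        Finset.prod_congr rfl hfac
    _ = (∏ p ∈ P, (if p = (w, w+1) then (-1:ℝ) else 1)) * ∏ p ∈ P, (y (φ p).2 - y (φ p).1) :=
        Finset.prod_mul_distrib
    _ = - ∏ p ∈ P, (y p.2 - y p.1) := by
        rw [Finset.prod_ite_eq' P ((w, w+1) : ℕ × ℕ) (fun _ => (-1:ℝ))]
        have hmem : ((w, w+1) : ℕ × ℕ) ∈ P := by rw [hmemP]; exact ⟨⟨hw1, by omega⟩, ⟨by omega, hw2⟩, by omega⟩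
        rw [if_pos hmem]
        have : ∏ p ∈ P, (y (φ p).2 - y (φ p).1) = ∏ p ∈ P, (y p.2 - y p.1) := by
          apply Finset.prod_nbij' φ φ hφmem hφmem hφφ hφφ
          intro p hp; rfl
        rw [this]; ring

end S15

namespace S15
open Finset Real

variable {r k : ℕ}

lemma sinsin_eq (hr : 4 ≤ r) (u1 u2 : ℝ) :
    Real.sin (Real.pi * (u1 - u2) / (2 * (r : ℝ) - 2 + (k : ℝ)))
      * Real.sin (Real.pi * (u1 + u2) / (2 * (r : ℝ) - 2 + (k : ℝ)))
    = (Real.cos (2 * Real.pi * u2 / (2 * (r : ℝ) - 2 + (k : ℝ)))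
       - Real.cos (2 * Real.pi * u1 / (2 * (r : ℝ) - 2 + (k : ℝ)))) / 2 := by
  set N : ℝ := 2 * (r : ℝ) - 2 + (k : ℝ) with hN
  have hN0 : N ≠ 0 := ne_of_gt (NN_pos hr)
  rw [Real.cos_sub_cos]
  have e1 : (2 * Real.pi * u2 / N + 2 * Real.pi * u1 / N) / 2 = Real.pi * (u1 + u2) / N := by
    field_simp; ring
  have e2 : (2 * Real.pi * u2 / N - 2 * Real.pi * u1 / N) / 2 = -(Real.pi * (u1 - u2) / N) := by
    field_simp; ring
  rw [e1, e2, Real.sin_neg]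
  ring

lemma cos_refl (hr : 4 ≤ r) (u : ℝ) :
    Real.cos (2 * Real.pi * ((2 * (r : ℝ) - 2 + (k : ℝ)) - u) / (2 * (r : ℝ) - 2 + (k : ℝ)))
    = Real.cos (2 * Real.pi * u / (2 * (r : ℝ) - 2 + (k : ℝ))) := by
  set N : ℝ := 2 * (r : ℝ) - 2 + (k : ℝ) with hN
  have hN0 : N ≠ 0 := ne_of_gt (NN_pos hr)
  have : 2 * Real.pi * (N - u) / N = 2 * Real.pi - 2 * Real.pi * u / N := by
    field_simp
  rw [this, Real.cos_sub, Real.cos_two_pi, Real.sin_two_pi]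
  ring

lemma qdim_neg (hr : 4 ≤ r) (lam lam' : ℕ → ℤ) (w : ℕ) (hw1 : 1 ≤ w) (hw2 : w + 1 ≤ r)
    (hoth : ∀ p, 1 ≤ p → p ≤ r → p ≠ w → p ≠ w + 1 → uCoord r lam' p = uCoord r lam p)
    (h2 : uCoord r lam' w = (2 * (r : ℝ) - 2 + (k : ℝ)) - uCoord r lam (w + 1))
    (h3 : uCoord r lam' (w + 1) = (2 * (r : ℝ) - 2 + (k : ℝ)) - uCoord r lam w) :
    qdimD r k lam' = - qdimD r k lam := by
  set N : ℝ := 2 * (r : ℝ) - 2 + (k : ℝ) with hN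
  set y : ℕ → ℝ := fun p => Real.cos (2 * Real.pi * uCoord r lam p / N) with hy
  set P := (Finset.Icc 1 r ×ˢ Finset.Icc 1 r).filter (fun p : ℕ × ℕ => p.1 < p.2) with hP
  have hy' : ∀ p, 1 ≤ p → p ≤ r →
      Real.cos (2 * Real.pi * uCoord r lam' p / N) = y (swF w p) := by
    intro p hp1 hp2
    by_cases e1 : p = w
    · subst e1
      rw [h2, hy]
      have : swF p p = p + 1 := by unfold swF; split_ifs <;> omega
      rw [this]
      exact cos_refl hr _
    · by_cases e2 : p = w + 1
      · subst e2
        rw [h3, hy]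
        have : swF w (w + 1) = w := by unfold swF; split_ifs <;> omega
        rw [this]
        exact cos_refl hr _
      · rw [hoth p hp1 hp2 e1 e2, hy]
        have : swF w p = p := by unfold swF; split_ifs <;> omega
        rw [this]
  have hden : ∀ p : ℕ × ℕ, True := fun _ => trivial
  have key : ∀ (mu : ℕ → ℤ) (z : ℕ → ℝ),
      (∀ p, 1 ≤ p → p ≤ r → Real.cos (2 * Real.pi * uCoord r mu p / N) = z p) →
      qdimD r k mu = (∏ p ∈ P, (z p.2 - z p.1)) *
        ∏ p ∈ P, (2 * (Real.sin (Real.pi * ((p.2 : ℝ) - (p.1 : ℝ)) / N)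
          * Real.sin (Real.pi * (2 * (r : ℝ) - (p.1 : ℝ) - (p.2 : ℝ)) / N)))⁻¹ := by
    intro mu z hz
    rw [← Finset.prod_mul_distrib]
    unfold qdimD
    rw [← hP, ← hN]
    apply Finset.prod_congr rfl
    intro p hp
    have hpm : (1 ≤ p.1 ∧ p.1 ≤ r) ∧ (1 ≤ p.2 ∧ p.2 ≤ r) ∧ p.1 < p.2 := by
      simp only [hP, Finset.mem_filter, Finset.mem_product, Finset.mem_Icc] at hp
      tauto
    rw [sinsin_eq hr, hz p.2 hpm.2.1.1 hpm.2.1.2, hz p.1 hpm.1.1 hpm.1.2]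
    rw [div_eq_mul_inv, div_eq_mul_inv]
    ring
  have q1 := key lam y (fun p h1p h2p => rfl)
  have q2 := key lam' (fun p => y (swF w p)) hy'
  rw [q2, q1, prod_swap_pairs r w hw1 hw2 y]
  ring

end S15

namespace S15
open Finset Real

variable {r k b : ℕ}

/-- partial sums from index `v` on -/
def TT (c : Fin b → ℕ) (v : ℕ) : ℕ := ∑ i ∈ Finset.univ.filter (fun i : Fin b => v ≤ (i : ℕ)), c i

lemma TT_zero (c : Fin b → ℕ) (v : ℕ) (hv : b ≤ v) : TT c v = 0 := by
  unfold TT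
  rw [Finset.sum_eq_zero]
  intro i hi
  simp only [Finset.mem_filter] at hi
  have := i.isLt
  omega

lemma TT_succ (c : Fin b → ℕ) (v : ℕ) (hv : v < b) : TT c v = c ⟨v, hv⟩ + TT c (v + 1) := by
  unfold TT
  have : Finset.univ.filter (fun i : Fin b => v ≤ (i : ℕ))
      = insert ⟨v, hv⟩ (Finset.univ.filter (fun i : Fin b => v + 1 ≤ (i : ℕ))) := by
    ext i
    simp only [Finset.mem_filter, Finset.mem_insert, Finset.mem_univ, true_and]
    constructor
    · intro h
      rcases Nat.eq_or_lt_of_le h with h' | h'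
      · left; exact Fin.ext h'.symm
      · right; omega
    · rintro (h | h)
      · subst h; simp
      · omega
  rw [this, Finset.sum_insert]
  simp only [Finset.mem_filter, Finset.mem_univ, true_and]
  omega

lemma TT_anti (c : Fin b → ℕ) (u v : ℕ) (huv : u ≤ v) : TT c v ≤ TT c u := by
  apply Finset.sum_le_sum_of_subset
  intro i hi
  simp only [Finset.mem_filter, Finset.mem_univ, true_and] at hi ⊢
  omega

lemma TT_total (c : Fin b → ℕ) : TT c 0 = ∑ i, c i := by
  unfold TT
  congr 1
  ext i
  simp

lemma c_le_TT (c : Fin b → ℕ) (i : Fin b) : c i ≤ TT c (i : ℕ) := by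
  rw [TT_succ c (i : ℕ) i.isLt]
  simp only [Fin.eta]
  omega

/-- the weight functions: coefficients on nodes `2 i + d` -/
def lamG (d : ℕ) (c : Fin b → ℕ) : ℕ → ℤ :=
  fun j => ∑ i : Fin b, if j = 2 * (i : ℕ) + d then (c i : ℤ) else 0

lemma lamG_zero (d : ℕ) (c : Fin b → ℕ) (q : ℕ) (hq : 2 * b + d ≤ q + 1) : lamG d c q = 0 := by
  unfold lamG
  apply Finset.sum_eq_zero
  intro i _
  have := i.isLt
  rw [if_neg (by omega)]

lemma uG (hr : 4 ≤ r) (d : ℕ) (hd : 1 ≤ d) (hbd : 2 * b + d ≤ r) (c : Fin b → ℕ)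
    (p : ℕ) (hp1 : 1 ≤ p) (hp2 : p ≤ r) :
    uCoord r (lamG d c) p = (TT c ((p + 1 - d) / 2) : ℝ) + ((r : ℝ) - (p : ℝ)) := by
  have hz1 : lamG d c (r - 1) = 0 := lamG_zero d c (r - 1) (by omega)
  have hz2 : lamG d c r = 0 := lamG_zero d c r (by omega)
  by_cases hpr : p = r
  · subst hpr
    unfold uCoord
    rw [if_pos rfl, hz1, hz2, TT_zero c _ (by omega)]
    push_cast
    ring
  · unfold uCoord
    rw [if_neg hpr, hz1, hz2]
    have hsum : ∑ j ∈ Finset.Icc p (r - 2), lamG d c j = (TT c ((p + 1 - d) / 2) : ℤ) := by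
      unfold lamG TT
      rw [Finset.sum_comm]
      push_cast
      rw [Finset.sum_filter]
      apply Finset.sum_congr rfl
      intro i _
      rw [Finset.sum_ite_eq' (Finset.Icc p (r - 2)) (2 * (i : ℕ) + d) (fun _ => (c i : ℤ))]
      have := i.isLt
      by_cases hmem : p ≤ 2 * (i : ℕ) + d
      · rw [if_pos (Finset.mem_Icc.mpr ⟨hmem, by omega⟩), if_pos (by omega)]
      · rw [if_neg (by simp only [Finset.mem_Icc]; omega), if_neg (by omega)]
    have : ∑ j ∈ Finset.Icc p (r - 2), ((lamG d c j : ℤ) : ℝ)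
        = ((∑ j ∈ Finset.Icc p (r - 2), lamG d c j : ℤ) : ℝ) := by
      push_cast
      rfl
    rw [this, hsum]
    push_cast
    ring

end S15

namespace S15
open Finset Real

variable {r k b : ℕ}

/-- validity of the reflection at `w` (even case) -/
def validE (k : ℕ) (b : ℕ) (c : Fin b → ℕ) (w : ℕ) : Prop :=
  w < b ∧ TT c w + TT c (w + 1) ≤ k + 4 * w + 1 ∧
    (w = 0 ∨ k + 4 * w + 1 ≤ TT c (w - 1) + TT c w)

instance (k b : ℕ) (c : Fin b → ℕ) (w : ℕ) : Decidable (validE k b c w) := by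
  unfold validE; infer_instance

/-- the reflection at `w` (even case) -/
def reflE (k : ℕ) (c : Fin b → ℕ) (w : ℕ) : Fin b → ℕ := fun i =>
  if (i : ℕ) = w then (k + 4 * w + 1) - TT c w - TT c (w + 1)
  else if (i : ℕ) + 1 = w then c i + 2 * TT c w - (k + 4 * w + 1)
  else c i

lemma TT_reflE_high (c : Fin b → ℕ) (w v : ℕ) (hv : w + 1 ≤ v) :
    TT (reflE k c w) v = TT c v := by
  unfold TT
  apply Finset.sum_congr rfl
  intro i hi
  simp only [Finset.mem_filter, Finset.mem_univ, true_and] at hi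
  unfold reflE
  rw [if_neg (by omega), if_neg (by omega)]

lemma TT_reflE_at (c : Fin b → ℕ) (w : ℕ) (hw : w < b)
    (hV1 : TT c w + TT c (w + 1) ≤ k + 4 * w + 1) :
    TT (reflE k c w) w = (k + 4 * w + 1) - TT c w := by
  rw [TT_succ _ w hw, TT_reflE_high c w (w + 1) le_rfl]
  have : reflE k c w ⟨w, hw⟩ = (k + 4 * w + 1) - TT c w - TT c (w + 1) := by
    unfold reflE; rw [if_pos rfl]
  rw [this]
  omega

lemma TT_reflE_low (c : Fin b → ℕ) (w : ℕ) (hw : w < b)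
    (hV1 : TT c w + TT c (w + 1) ≤ k + 4 * w + 1)
    (hV2 : k + 4 * w + 1 ≤ TT c (w - 1) + TT c w) :
    ∀ dd v, v + dd + 1 = w → TT (reflE k c w) v = TT c v := by
  intro dd
  induction dd with
  | zero =>
    intro v hv
    have hvb : v < b := by omega
    have he2 : v + 1 = w := by omega
    have hdec : TT c v = c ⟨v, hvb⟩ + TT c (v + 1) := TT_succ c v hvb
    have hat : TT (reflE k c w) (v + 1) = (k + 4 * w + 1) - TT c w := by
      rw [he2]; exact TT_reflE_at c w hw hV1
    have hc' : reflE k c w ⟨v, hvb⟩ = c ⟨v, hvb⟩ + 2 * TT c w - (k + 4 * w + 1) := by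
      simp only [reflE, Fin.val_mk]
      rw [if_neg (by omega), if_pos (by omega)]
    have hwv : w - 1 = v := by omega
    rw [hwv, hdec, he2] at hV2
    rw [TT_succ _ v hvb, TT_succ c v hvb, hat, hc', he2]
    omega
  | succ n ih =>
    intro v hv
    have hvb : v < b := by omega
    have hc' : reflE k c w ⟨v, hvb⟩ = c ⟨v, hvb⟩ := by
      simp only [reflE, Fin.val_mk]
      rw [if_neg (by omega), if_neg (by omega)]
    rw [TT_succ _ v hvb, TT_succ c v hvb, ih (v + 1) (by omega), hc']

lemma TT_reflE_low' (c : Fin b → ℕ) (w : ℕ) (hw : w < b)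
    (hV1 : TT c w + TT c (w + 1) ≤ k + 4 * w + 1)
    (hV2 : k + 4 * w + 1 ≤ TT c (w - 1) + TT c w)
    (v : ℕ) (hv : v < w) : TT (reflE k c w) v = TT c v :=
  TT_reflE_low c w hw hV1 hV2 (w - 1 - v) v (by omega)


lemma reflE_invol (c : Fin b → ℕ) (w : ℕ) (hVE : validE k b c w) :
    reflE k (reflE k c w) w = c := by
  obtain ⟨hw, hV1, hV2⟩ := hVE
  have hat : TT (reflE k c w) w = (k + 4 * w + 1) - TT c w := TT_reflE_at c w hw hV1
  have hhigh : TT (reflE k c w) (w + 1) = TT c (w + 1) := TT_reflE_high c w (w + 1) le_rfl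
  funext i
  by_cases hiw : (i : ℕ) = w
  · have hdec : TT c w = c i + TT c (w + 1) := by
      have := TT_succ c w hw
      have hie : (⟨w, hw⟩ : Fin b) = i := by apply Fin.ext; simp [hiw]
      rw [hie] at this
      exact this
    have e1 : reflE k (reflE k c w) w i
        = (k + 4 * w + 1) - TT (reflE k c w) w - TT (reflE k c w) (w + 1) := by
      simp only [reflE]
      rw [if_pos hiw]
    rw [e1, hat, hhigh]
    omega
  · by_cases hiw1 : (i : ℕ) + 1 = w
    · have hvb : (i : ℕ) < b := i.isLt
      have hdecm : TT c ((i : ℕ)) = c i + TT c ((i : ℕ) + 1) := by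
        have := TT_succ c (i : ℕ) hvb
        simp only [Fin.eta] at this
        exact this
      have hV2' : k + 4 * w + 1 ≤ (c i + TT c w) + TT c w := by
        have hV2r : k + 4 * w + 1 ≤ TT c (w - 1) + TT c w := hV2.resolve_left (by omega)
        have hwi : w - 1 = (i : ℕ) := by omega
        rw [hwi, hdecm, hiw1] at hV2r
        exact hV2r
      have e1 : reflE k (reflE k c w) w i
          = reflE k c w i + 2 * TT (reflE k c w) w - (k + 4 * w + 1) := by
        simp only [reflE]
        rw [if_neg hiw, if_pos hiw1, if_neg hiw, if_pos hiw1]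
      have e2 : reflE k c w i = c i + 2 * TT c w - (k + 4 * w + 1) := by
        simp only [reflE]
        rw [if_neg hiw, if_pos hiw1]
      rw [e1, e2, hat]
      omega
    · simp only [reflE]
      rw [if_neg hiw, if_neg hiw1, if_neg hiw, if_neg hiw1]

lemma validE_reflE (c : Fin b → ℕ) (w : ℕ) (hVE : validE k b c w) :
    validE k b (reflE k c w) w := by
  obtain ⟨hw, hV1, hV2⟩ := hVE
  have hat : TT (reflE k c w) w = (k + 4 * w + 1) - TT c w := TT_reflE_at c w hw hV1
  have hhigh : TT (reflE k c w) (w + 1) = TT c (w + 1) := TT_reflE_high c w (w + 1) le_rfl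
  have hmono : TT c (w + 1) ≤ TT c w := TT_anti c w (w + 1) (by omega)
  refine ⟨hw, ?_, ?_⟩
  · rw [hat, hhigh]; omega
  · by_cases hw0 : w = 0
    · exact Or.inl hw0
    · right
      have h2 : k + 4 * w + 1 ≤ TT c (w - 1) + TT c w := hV2.resolve_left hw0
      have hlow : TT (reflE k c w) (w - 1) = TT c (w - 1) := TT_reflE_low' c w hw hV1 h2 (w - 1) (by omega)
      have hmono2 : TT c w ≤ TT c (w - 1) := TT_anti c (w - 1) w (by omega)
      rw [hlow, hat]
      omega


lemma validE_reflE_min (c : Fin b → ℕ) (w : ℕ) (hVE : validE k b c w)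
    (hmin : ∀ v, v < w → ¬ validE k b c v) :
    ∀ v, v < w → ¬ validE k b (reflE k c w) v := by
  obtain ⟨hw, hV1, hV2⟩ := hVE
  intro v hvw hvalid'
  have hw0 : w ≠ 0 := by omega
  have hV2r : k + 4 * w + 1 ≤ TT c (w - 1) + TT c w := hV2.resolve_left hw0
  by_cases hv1 : v + 1 = w
  · -- v = w - 1 : impossible for c'
    obtain ⟨hvb, hV1', _⟩ := hvalid'
    have e1 : TT (reflE k c w) v = TT c v :=
      TT_reflE_low' c w hw hV1 hV2r v (by omega)
    have e2 : TT (reflE k c w) (v + 1) = (k + 4 * w + 1) - TT c w := by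
      rw [hv1]; exact TT_reflE_at c w hw hV1
    have hmono : TT c w ≤ TT c v := TT_anti c v w (by omega)
    rw [e1, e2] at hV1'
    omega
  · -- v ≤ w - 2 : validity transfers back to c
    apply hmin v hvw
    obtain ⟨hvb, hV1', hV2'⟩ := hvalid'
    have e1 : TT (reflE k c w) v = TT c v :=
      TT_reflE_low' c w hw hV1 hV2r v (by omega)
    have e2 : TT (reflE k c w) (v + 1) = TT c (v + 1) :=
      TT_reflE_low' c w hw hV1 hV2r (v + 1) (by omega)
    have e3 : TT (reflE k c w) (v - 1) = TT c (v - 1) :=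
      TT_reflE_low' c w hw hV1 hV2r (v - 1) (by omega)
    rw [e1, e2] at hV1'
    rw [e1, e3] at hV2'
    exact ⟨hvb, hV1', hV2'⟩

lemma reflE_mem (m : ℕ) (c : Fin b → ℕ) (w : ℕ) (hVE : validE k b c w)
    (hk1 : k + 1 ≤ m) (hc : ∀ i, c i ≤ m) (hS : ∑ i, c i ≤ m) :
    (∀ i, reflE k c w i ≤ m) ∧ ∑ i, reflE k c w i ≤ m := by
  obtain ⟨hw, hV1, hV2⟩ := hVE
  have hS0 : TT c 0 ≤ m := by rw [TT_total]; exact hS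
  have hprev : TT c (w - 1) ≤ m := le_trans (TT_anti c 0 (w - 1) (by omega)) hS0
  have hV2' : w = 0 ∨ k + 4 * w + 1 ≤ TT c (w - 1) + TT c w := hV2
  constructor
  · intro i
    by_cases hiw : (i : ℕ) = w
    · have e : reflE k c w i = (k + 4 * w + 1) - TT c w - TT c (w + 1) := by
        simp only [reflE]; rw [if_pos hiw]
      rw [e]
      rcases hV2' with h0 | h2
      · subst h0; omega
      · omega
    · by_cases hiw1 : (i : ℕ) + 1 = w
      · have e : reflE k c w i = c i + 2 * TT c w - (k + 4 * w + 1) := by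
          simp only [reflE]; rw [if_neg hiw, if_pos hiw1]
        rw [e]
        have hdecm : TT c ((i : ℕ)) = c i + TT c ((i : ℕ) + 1) := by
          have := TT_succ c (i : ℕ) i.isLt
          simp only [Fin.eta] at this
          exact this
        have hV2r : k + 4 * w + 1 ≤ TT c (w - 1) + TT c w := hV2.resolve_left (by omega)
        have hwi : (i : ℕ) = w - 1 := by omega
        have h1 : TT c (w - 1) = c i + TT c w := by
          rw [← hwi, hdecm, hiw1]
        omega
      · have e : reflE k c w i = c i := by
          simp only [reflE]; rw [if_neg hiw, if_neg hiw1]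
        rw [e]; exact hc i
  · rw [← TT_total]
    by_cases hw0 : w = 0
    · subst hw0
      rw [TT_reflE_at c 0 hw hV1]
      omega
    · have hV2r := hV2.resolve_left hw0
      rw [TT_reflE_low' c w hw hV1 hV2r 0 (by omega)]
      exact hS0

lemma qdim_reflE_neg (hr : 4 ≤ r) (hbr : 2 * b + 2 ≤ r) (c : Fin b → ℕ) (w : ℕ)
    (hVE : validE k b c w) :
    qdimD r k (lamG 2 (reflE k c w)) = - qdimD r k (lamG 2 c) := by
  obtain ⟨hw, hV1, hV2⟩ := hVE
  apply qdim_neg hr _ _ (2 * w + 1) (by omega) (by omega)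
  · intro p hp1 hpr hne1 hne2
    rw [uG hr 2 (by omega) (by omega) _ p hp1 hpr, uG hr 2 (by omega) (by omega) _ p hp1 hpr]
    have : TT (reflE k c w) ((p + 1 - 2) / 2) = TT c ((p + 1 - 2) / 2) := by
      rcases lt_or_ge ((p + 1 - 2) / 2) w with hlt | hge
      · have hw0 : w ≠ 0 := by omega
        exact TT_reflE_low' c w hw hV1 (hV2.resolve_left hw0) _ hlt
      · have : w + 1 ≤ (p + 1 - 2) / 2 := by omega
        exact TT_reflE_high c w _ this
    rw [this]
  · rw [uG hr 2 (by omega) (by omega) _ (2 * w + 1) (by omega) (by omega),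
        uG hr 2 (by omega) (by omega) _ (2 * w + 1 + 1) (by omega) (by omega)]
    have e1 : (2 * w + 1 + 1 - 2) / 2 = w := by omega
    have e2 : (2 * w + 1 + 1 + 1 - 2) / 2 = w := by omega
    rw [e1, e2, TT_reflE_at c w hw hV1]
    have hle : TT c w ≤ k + 4 * w + 1 := by omega
    rw [Nat.cast_sub hle]
    push_cast
    ring
  · rw [uG hr 2 (by omega) (by omega) _ (2 * w + 1 + 1) (by omega) (by omega),
        uG hr 2 (by omega) (by omega) _ (2 * w + 1) (by omega) (by omega)]
    have e1 : (2 * w + 1 + 1 - 2) / 2 = w := by omega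
    have e2 : (2 * w + 1 + 1 + 1 - 2) / 2 = w := by omega
    rw [e1, e2, TT_reflE_at c w hw hV1]
    have hle : TT c w ≤ k + 4 * w + 1 := by omega
    rw [Nat.cast_sub hle]
    push_cast
    ring

lemma qdim_reflE_fix (hr : 4 ≤ r) (hbr : 2 * b + 2 ≤ r) (c : Fin b → ℕ) (w : ℕ)
    (hVE : validE k b c w) (hfix : reflE k c w = c) :
    qdimD r k (lamG 2 c) = 0 := by
  obtain ⟨hw, hV1, hV2⟩ := hVE
  have hfw := congrFun hfix ⟨w, hw⟩
  have e : reflE k c w ⟨w, hw⟩ = (k + 4 * w + 1) - TT c w - TT c (w + 1) := by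
    simp [reflE]
  rw [e] at hfw
  have hdec : TT c w = c ⟨w, hw⟩ + TT c (w + 1) := TT_succ c w hw
  have h2t : 2 * TT c w = k + 4 * w + 1 := by omega
  apply qdim_zero hr _ (2 * w + 1) (2 * w + 2) (by omega) (by omega) (by omega)
  right
  rw [uG hr 2 (by omega) (by omega) _ (2 * w + 1) (by omega) (by omega),
      uG hr 2 (by omega) (by omega) _ (2 * w + 2) (by omega) (by omega)]
  have e1 : (2 * w + 1 + 1 - 2) / 2 = w := by omega
  have e2 : (2 * w + 2 + 1 - 2) / 2 = w := by omega
  rw [e1, e2]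
  have hcast : ((TT c w : ℝ)) + ((TT c w : ℝ)) = (k : ℝ) + 4 * (w : ℝ) + 1 := by
    exact_mod_cast (by omega : TT c w + TT c w = k + 4 * w + 1)
  push_cast
  linarith

lemma even_novalid (hr : 4 ≤ r) (hk : 1 ≤ k) (hb : 1 ≤ b) (hbr : 2 * b + 2 ≤ r)
    (m j : ℕ) (hm : m = k + j) (hj1 : 1 ≤ j) (hj2 : j ≤ 2 * r - 3)
    (c : Fin b → ℕ) (hS : ∑ i, c i ≤ m) (H : ∀ w, ¬ validE k b c w) :
    qdimD r k (lamG 2 c) = 0 := by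
  have hS0 : TT c 0 ≤ m := by rw [TT_total]; exact hS
  by_cases Hg : ∃ w, w < b ∧ TT c w + TT c (w + 1) ≤ k + 4 * w + 4
  · obtain ⟨W, ⟨hWb, hWle⟩, hmin⟩ :
        ∃ W, (W < b ∧ TT c W + TT c (W + 1) ≤ k + 4 * W + 4) ∧
          ∀ v, v < W → ¬ (v < b ∧ TT c v + TT c (v + 1) ≤ k + 4 * v + 4) :=
      ⟨Nat.find Hg, Nat.find_spec Hg, fun v hv => Nat.find_min Hg hv⟩
    have hV2 : W = 0 ∨ k + 4 * W + 1 ≤ TT c (W - 1) + TT c W := by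
      by_cases h0 : W = 0
      · exact Or.inl h0
      · right
        have := hmin (W - 1) (by omega)
        have hWb' : W - 1 < b := by omega
        have : ¬ (TT c (W - 1) + TT c (W - 1 + 1) ≤ k + 4 * (W - 1) + 4) := by tauto
        have he : W - 1 + 1 = W := by omega
        rw [he] at this
        omega
    rcases lt_or_ge (k + 4 * W + 1) (TT c W + TT c (W + 1)) with hgap | hval
    · -- gap case: collision
      have h234 : TT c W + TT c (W + 1) = k + 4 * W + 2 ∨ TT c W + TT c (W + 1) = k + 4 * W + 3
          ∨ TT c W + TT c (W + 1) = k + 4 * W + 4 := by omega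
      have eW : (2 * W + 1 + 1 - 2) / 2 = W := by omega
      have eW2 : (2 * W + 2 + 1 - 2) / 2 = W := by omega
      have eW3 : (2 * W + 3 + 1 - 2) / 2 = W + 1 := by omega
      have eW4 : (2 * W + 4 + 1 - 2) / 2 = W + 1 := by omega
      rcases h234 with h2 | h3 | h4
      · apply qdim_zero hr _ (2 * W + 1) (2 * W + 3) (by omega) (by omega) (by omega)
        right
        rw [uG hr 2 (by omega) (by omega) _ (2 * W + 1) (by omega) (by omega),
            uG hr 2 (by omega) (by omega) _ (2 * W + 3) (by omega) (by omega), eW, eW3]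
        have hcast : ((TT c W : ℝ)) + ((TT c (W + 1) : ℝ)) = (k : ℝ) + 4 * (W : ℝ) + 2 := by
          exact_mod_cast h2
        push_cast
        linarith
      · apply qdim_zero hr _ (2 * W + 1) (2 * W + 4) (by omega) (by omega) (by omega)
        right
        rw [uG hr 2 (by omega) (by omega) _ (2 * W + 1) (by omega) (by omega),
            uG hr 2 (by omega) (by omega) _ (2 * W + 4) (by omega) (by omega), eW, eW4]
        have hcast : ((TT c W : ℝ)) + ((TT c (W + 1) : ℝ)) = (k : ℝ) + 4 * (W : ℝ) + 3 := by
          exact_mod_cast h3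
        push_cast
        linarith
      · apply qdim_zero hr _ (2 * W + 2) (2 * W + 4) (by omega) (by omega) (by omega)
        right
        rw [uG hr 2 (by omega) (by omega) _ (2 * W + 2) (by omega) (by omega),
            uG hr 2 (by omega) (by omega) _ (2 * W + 4) (by omega) (by omega), eW2, eW4]
        have hcast : ((TT c W : ℝ)) + ((TT c (W + 1) : ℝ)) = (k : ℝ) + 4 * (W : ℝ) + 4 := by
          exact_mod_cast h4
        push_cast
        linarith
    · -- valid at W : contradiction
      exact absurd ⟨hWb, hval, hV2⟩ (H W)
  · -- no gap anywhere: tail collision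
    push_neg at Hg
    have ht : k + 4 * b + 1 ≤ TT c (b - 1) := by
      have h1 := Hg (b - 1) (by omega)
      have h2 : TT c (b - 1 + 1) = 0 := by
        apply TT_zero; omega
      omega
    set t := TT c (b - 1) with htdef
    have htm : t ≤ m := le_trans (TT_anti c 0 (b - 1) (by omega)) hS0
    obtain ⟨p1, hp1⟩ : ∃ p1, p1 + 1 = 2 * b := ⟨2 * b - 1, by omega⟩
    have ep1 : (p1 + 1 - 2) / 2 = b - 1 := by omega
    rcases le_or_gt (t + 3) (k + r + 2 * b) with hcase | hcase
    · -- sum collision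
      obtain ⟨p2, hp2⟩ : ∃ p2, p2 + k + 2 * b = t + 3 := ⟨t + 3 - (k + 2 * b), by omega⟩
      have hz : TT c ((p2 + 1 - 2) / 2) = 0 := by apply TT_zero; omega
      apply qdim_zero hr _ p1 p2 (by omega) (by omega) (by omega)
      right
      rw [uG hr 2 (by omega) (by omega) _ p1 (by omega) (by omega),
          uG hr 2 (by omega) (by omega) _ p2 (by omega) (by omega), ep1, hz, ← htdef]
      have hc1 : ((p2 : ℝ)) + (k : ℝ) + 2 * (b : ℝ) = (t : ℝ) + 3 := by exact_mod_cast hp2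
      have hc2 : ((p1 : ℝ)) + 1 = 2 * (b : ℝ) := by exact_mod_cast hp1
      push_cast
      linarith
    · -- difference collision
      obtain ⟨p2, hp2⟩ : ∃ p2, p2 + t + 2 = k + 2 * r + 2 * b := ⟨k + 2 * r + 2 * b - (t + 2), by omega⟩
      have hz : TT c ((p2 + 1 - 2) / 2) = 0 := by apply TT_zero; omega
      apply qdim_zero hr _ (2 * b) p2 (by omega) (by omega) (by omega)
      left
      have ep : (2 * b + 1 - 2) / 2 = b - 1 := by omega
      rw [uG hr 2 (by omega) (by omega) _ (2 * b) (by omega) (by omega),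
          uG hr 2 (by omega) (by omega) _ p2 (by omega) (by omega), ep, hz, ← htdef]
      have hc1 : ((p2 : ℝ)) + (t : ℝ) + 2 = (k : ℝ) + 2 * (r : ℝ) + 2 * (b : ℝ) := by
        exact_mod_cast hp2
      push_cast
      linarith


lemma even_main (hr : 4 ≤ r) (hk : 1 ≤ k) (hb : 1 ≤ b) (hbr : 2 * b + 2 ≤ r)
    (m j : ℕ) (hm : m = k + j) (hj1 : 1 ≤ j) (hj2 : j ≤ 2 * r - 3) :
    ∑ c ∈ (Fintype.piFinset (fun _ : Fin b => Finset.range (m + 1))).filter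
        (fun c => ∑ i, c i ≤ m), qdimD r k (lamG 2 c) = 0 := by
  have hmem : ∀ c : Fin b → ℕ,
      c ∈ (Fintype.piFinset (fun _ : Fin b => Finset.range (m + 1))).filter
        (fun c => ∑ i, c i ≤ m) ↔ (∀ i, c i ≤ m) ∧ ∑ i, c i ≤ m := by
    intro c
    simp only [Finset.mem_filter, Fintype.mem_piFinset, Finset.mem_range, Nat.lt_succ_iff]
  classical
  apply Finset.sum_involution
    (g := fun c _ => if H : ∃ w, validE k b c w then reflE k c (Nat.find H) else c)
  · -- f a + f (g a) = 0
    intro c hc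
    by_cases H : ∃ w, validE k b c w
    · rw [dif_pos H, qdim_reflE_neg hr hbr c (Nat.find H) (Nat.find_spec H)]
      ring
    · rw [dif_neg H]
      push_neg at H
      have h0 : qdimD r k (lamG 2 c) = 0 :=
        even_novalid hr hk hb hbr m j hm hj1 hj2 c ((hmem c).mp hc).2
          (fun w => H w)
      rw [h0]; norm_num
  · -- g a ≠ a when f a ≠ 0
    intro c hc hf
    by_cases H : ∃ w, validE k b c w
    · rw [dif_pos H]
      intro hfix
      exact hf (qdim_reflE_fix hr hbr c (Nat.find H) (Nat.find_spec H) hfix)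
    · rw [dif_neg H]
      push_neg at H
      intro _
      exact hf (even_novalid hr hk hb hbr m j hm hj1 hj2 c ((hmem c).mp hc).2 (fun w => H w))
  · -- g a ∈ s
    intro c hc
    by_cases H : ∃ w, validE k b c w
    · rw [dif_pos H]
      obtain ⟨h1, h2⟩ := (hmem c).mp hc
      have := reflE_mem m c (Nat.find H) (Nat.find_spec H) (by omega) h1 h2
      exact (hmem _).mpr this
    · rw [dif_neg H]; exact hc
  · -- involution
    intro c hc
    by_cases H : ∃ w, validE k b c w
    · simp only [dif_pos H]
      have hVE := Nat.find_spec H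
      have hVE' : validE k b (reflE k c (Nat.find H)) (Nat.find H) :=
        validE_reflE c (Nat.find H) hVE
      have H' : ∃ w, validE k b (reflE k c (Nat.find H)) w := ⟨Nat.find H, hVE'⟩
      rw [dif_pos H']
      have hfind : Nat.find H' = Nat.find H := by
        rw [Nat.find_eq_iff]
        exact ⟨hVE', validE_reflE_min c (Nat.find H) hVE
          (fun v hv => Nat.find_min H hv)⟩
      rw [hfind, reflE_invol c (Nat.find H) hVE]
    · simp only [dif_neg H]


/-! ## Odd case -/

def validO (k : ℕ) (b : ℕ) (c : Fin b → ℕ) (w : ℕ) : Prop :=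
  1 ≤ w ∧ w < b ∧ TT c w + TT c (w + 1) + 1 ≤ k + 4 * w ∧
    k + 4 * w ≤ TT c (w - 1) + TT c w + 1

instance (k b : ℕ) (c : Fin b → ℕ) (w : ℕ) : Decidable (validO k b c w) := by
  unfold validO; infer_instance

def reflO (k : ℕ) (c : Fin b → ℕ) (w : ℕ) : Fin b → ℕ := fun i =>
  if (i : ℕ) = w then (k + 4 * w - 1) - TT c w - TT c (w + 1)
  else if (i : ℕ) + 1 = w then c i + 2 * TT c w + 1 - (k + 4 * w)
  else c i

lemma TT_reflO_high (c : Fin b → ℕ) (w v : ℕ) (hv : w + 1 ≤ v) :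
    TT (reflO k c w) v = TT c v := by
  unfold TT
  apply Finset.sum_congr rfl
  intro i hi
  simp only [Finset.mem_filter, Finset.mem_univ, true_and] at hi
  unfold reflO
  rw [if_neg (by omega), if_neg (by omega)]

lemma TT_reflO_at (c : Fin b → ℕ) (w : ℕ) (hw : w < b) (hw1 : 1 ≤ w) (hk1 : 1 ≤ k)
    (hV1 : TT c w + TT c (w + 1) + 1 ≤ k + 4 * w) :
    TT (reflO k c w) w = (k + 4 * w - 1) - TT c w := by
  rw [TT_succ _ w hw, TT_reflO_high c w (w + 1) le_rfl]
  have : reflO k c w ⟨w, hw⟩ = (k + 4 * w - 1) - TT c w - TT c (w + 1) := by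
    unfold reflO; rw [if_pos rfl]
  rw [this]
  omega

lemma TT_reflO_low (c : Fin b → ℕ) (w : ℕ) (hw : w < b) (hw1 : 1 ≤ w) (hk1 : 1 ≤ k)
    (hV1 : TT c w + TT c (w + 1) + 1 ≤ k + 4 * w)
    (hV2 : k + 4 * w ≤ TT c (w - 1) + TT c w + 1) :
    ∀ dd v, v + dd + 1 = w → TT (reflO k c w) v = TT c v := by
  intro dd
  induction dd with
  | zero =>
    intro v hv
    have hvb : v < b := by omega
    have he2 : v + 1 = w := by omega
    have hdec : TT c v = c ⟨v, hvb⟩ + TT c (v + 1) := TT_succ c v hvb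
    have hat : TT (reflO k c w) (v + 1) = (k + 4 * w - 1) - TT c w := by
      rw [he2]; exact TT_reflO_at c w hw hw1 hk1 hV1
    have hc' : reflO k c w ⟨v, hvb⟩ = c ⟨v, hvb⟩ + 2 * TT c w + 1 - (k + 4 * w) := by
      simp only [reflO, Fin.val_mk]
      rw [if_neg (by omega), if_pos (by omega)]
    have hwv : w - 1 = v := by omega
    rw [hwv, hdec, he2] at hV2
    rw [TT_succ _ v hvb, TT_succ c v hvb, hat, hc', he2]
    omega
  | succ n ih =>
    intro v hv
    have hvb : v < b := by omega
    have hc' : reflO k c w ⟨v, hvb⟩ = c ⟨v, hvb⟩ := by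
      simp only [reflO, Fin.val_mk]
      rw [if_neg (by omega), if_neg (by omega)]
    rw [TT_succ _ v hvb, TT_succ c v hvb, ih (v + 1) (by omega), hc']

lemma TT_reflO_low' (c : Fin b → ℕ) (w : ℕ) (hw : w < b) (hw1 : 1 ≤ w) (hk1 : 1 ≤ k)
    (hV1 : TT c w + TT c (w + 1) + 1 ≤ k + 4 * w)
    (hV2 : k + 4 * w ≤ TT c (w - 1) + TT c w + 1)
    (v : ℕ) (hv : v < w) : TT (reflO k c w) v = TT c v :=
  TT_reflO_low c w hw hw1 hk1 hV1 hV2 (w - 1 - v) v (by omega)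

lemma reflO_invol (hk1 : 1 ≤ k) (c : Fin b → ℕ) (w : ℕ) (hVE : validO k b c w) :
    reflO k (reflO k c w) w = c := by
  obtain ⟨hw1, hw, hV1, hV2⟩ := hVE
  have hat : TT (reflO k c w) w = (k + 4 * w - 1) - TT c w := TT_reflO_at c w hw hw1 hk1 hV1
  have hhigh : TT (reflO k c w) (w + 1) = TT c (w + 1) := TT_reflO_high c w (w + 1) le_rfl
  funext i
  by_cases hiw : (i : ℕ) = w
  · have hdec : TT c w = c i + TT c (w + 1) := by
      have := TT_succ c w hw
      have hie : (⟨w, hw⟩ : Fin b) = i := by apply Fin.ext; simp [hiw]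
      rw [hie] at this
      exact this
    have e1 : reflO k (reflO k c w) w i
        = (k + 4 * w - 1) - TT (reflO k c w) w - TT (reflO k c w) (w + 1) := by
      simp only [reflO]
      rw [if_pos hiw]
    rw [e1, hat, hhigh]
    omega
  · by_cases hiw1 : (i : ℕ) + 1 = w
    · have hvb : (i : ℕ) < b := i.isLt
      have hdecm : TT c ((i : ℕ)) = c i + TT c ((i : ℕ) + 1) := by
        have := TT_succ c (i : ℕ) hvb
        simp only [Fin.eta] at this
        exact this
      have hV2' : k + 4 * w ≤ (c i + TT c w) + TT c w + 1 := by
        have hwi : w - 1 = (i : ℕ) := by omega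
        rw [hwi, hdecm, hiw1] at hV2
        omega
      have e1 : reflO k (reflO k c w) w i
          = reflO k c w i + 2 * TT (reflO k c w) w + 1 - (k + 4 * w) := by
        simp only [reflO]
        rw [if_neg hiw, if_pos hiw1, if_neg hiw, if_pos hiw1]
      have e2 : reflO k c w i = c i + 2 * TT c w + 1 - (k + 4 * w) := by
        simp only [reflO]
        rw [if_neg hiw, if_pos hiw1]
      rw [e1, e2, hat]
      omega
    · simp only [reflO]
      rw [if_neg hiw, if_neg hiw1, if_neg hiw, if_neg hiw1]

lemma validO_reflO (hk1 : 1 ≤ k) (c : Fin b → ℕ) (w : ℕ) (hVE : validO k b c w) :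
    validO k b (reflO k c w) w := by
  obtain ⟨hw1, hw, hV1, hV2⟩ := hVE
  have hat : TT (reflO k c w) w = (k + 4 * w - 1) - TT c w := TT_reflO_at c w hw hw1 hk1 hV1
  have hhigh : TT (reflO k c w) (w + 1) = TT c (w + 1) := TT_reflO_high c w (w + 1) le_rfl
  have hmono : TT c (w + 1) ≤ TT c w := TT_anti c w (w + 1) (by omega)
  have hlow : TT (reflO k c w) (w - 1) = TT c (w - 1) :=
    TT_reflO_low' c w hw hw1 hk1 hV1 hV2 (w - 1) (by omega)
  have hmono2 : TT c w ≤ TT c (w - 1) := TT_anti c (w - 1) w (by omega)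
  refine ⟨hw1, hw, ?_, ?_⟩
  · rw [hat, hhigh]; omega
  · rw [hlow, hat]; omega

lemma validO_reflO_min (hk1 : 1 ≤ k) (c : Fin b → ℕ) (w : ℕ) (hVE : validO k b c w)
    (hmin : ∀ v, v < w → ¬ validO k b c v) :
    ∀ v, v < w → ¬ validO k b (reflO k c w) v := by
  obtain ⟨hw1, hw, hV1, hV2⟩ := hVE
  intro v hvw hvalid'
  by_cases hv1 : v + 1 = w
  · obtain ⟨hv1', hvb, hV1', _⟩ := hvalid'
    have e1 : TT (reflO k c w) v = TT c v :=
      TT_reflO_low' c w hw hw1 hk1 hV1 hV2 v (by omega)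
    have e2 : TT (reflO k c w) (v + 1) = (k + 4 * w - 1) - TT c w := by
      rw [hv1]; exact TT_reflO_at c w hw hw1 hk1 hV1
    have hmono : TT c w ≤ TT c v := TT_anti c v w (by omega)
    rw [e1, e2] at hV1'
    omega
  · apply hmin v hvw
    obtain ⟨hv1', hvb, hV1', hV2'⟩ := hvalid'
    have e1 : TT (reflO k c w) v = TT c v :=
      TT_reflO_low' c w hw hw1 hk1 hV1 hV2 v (by omega)
    have e2 : TT (reflO k c w) (v + 1) = TT c (v + 1) :=
      TT_reflO_low' c w hw hw1 hk1 hV1 hV2 (v + 1) (by omega)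
    have e3 : TT (reflO k c w) (v - 1) = TT c (v - 1) :=
      TT_reflO_low' c w hw hw1 hk1 hV1 hV2 (v - 1) (by omega)
    rw [e1, e2] at hV1'
    rw [e1, e3] at hV2'
    exact ⟨hv1', hvb, hV1', hV2'⟩

lemma reflO_mem (hk1 : 1 ≤ k) (m : ℕ) (c : Fin b → ℕ) (w : ℕ) (hVE : validO k b c w)
    (hc : ∀ i, c i ≤ m) (hS : ∑ i, c i = m) :
    (∀ i, reflO k c w i ≤ m) ∧ ∑ i, reflO k c w i = m := by
  obtain ⟨hw1, hw, hV1, hV2⟩ := hVE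
  have hS0 : TT c 0 = m := by rw [TT_total]; exact hS
  have hprev : TT c (w - 1) ≤ m := by
    have := TT_anti c 0 (w - 1) (by omega)
    omega
  constructor
  · intro i
    by_cases hiw : (i : ℕ) = w
    · have e : reflO k c w i = (k + 4 * w - 1) - TT c w - TT c (w + 1) := by
        simp only [reflO]; rw [if_pos hiw]
      rw [e]
      omega
    · by_cases hiw1 : (i : ℕ) + 1 = w
      · have e : reflO k c w i = c i + 2 * TT c w + 1 - (k + 4 * w) := by
          simp only [reflO]; rw [if_neg hiw, if_pos hiw1]
        rw [e]
        have hdecm : TT c ((i : ℕ)) = c i + TT c ((i : ℕ) + 1) := by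
          have := TT_succ c (i : ℕ) i.isLt
          simp only [Fin.eta] at this
          exact this
        have hwi : (i : ℕ) = w - 1 := by omega
        have h1 : TT c (w - 1) = c i + TT c w := by
          rw [← hwi, hdecm, hiw1]
        omega
      · have e : reflO k c w i = c i := by
          simp only [reflO]; rw [if_neg hiw, if_neg hiw1]
        rw [e]; exact hc i
  · rw [← TT_total]
    rw [TT_reflO_low' c w hw hw1 hk1 hV1 hV2 0 (by omega)]
    exact hS0

lemma qdim_reflO_neg (hr : 4 ≤ r) (hk1 : 1 ≤ k) (hbr : 2 * b + 1 ≤ r) (c : Fin b → ℕ) (w : ℕ)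
    (hVE : validO k b c w) :
    qdimD r k (lamG 1 (reflO k c w)) = - qdimD r k (lamG 1 c) := by
  obtain ⟨hw1, hw, hV1, hV2⟩ := hVE
  apply qdim_neg hr _ _ (2 * w) (by omega) (by omega)
  · intro p hp1 hpr hne1 hne2
    rw [uG hr 1 (by omega) (by omega) _ p hp1 hpr, uG hr 1 (by omega) (by omega) _ p hp1 hpr]
    have : TT (reflO k c w) ((p + 1 - 1) / 2) = TT c ((p + 1 - 1) / 2) := by
      rcases lt_or_ge ((p + 1 - 1) / 2) w with hlt | hge
      · exact TT_reflO_low' c w hw hw1 hk1 hV1 hV2 _ hlt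
      · have : w + 1 ≤ (p + 1 - 1) / 2 := by omega
        exact TT_reflO_high c w _ this
    rw [this]
  · rw [uG hr 1 (by omega) (by omega) _ (2 * w) (by omega) (by omega),
        uG hr 1 (by omega) (by omega) _ (2 * w + 1) (by omega) (by omega)]
    have e1 : (2 * w + 1 - 1) / 2 = w := by omega
    have e2 : (2 * w + 1 + 1 - 1) / 2 = w := by omega
    rw [e1, e2, TT_reflO_at c w hw hw1 hk1 hV1]
    have hle : TT c w ≤ k + 4 * w - 1 := by omega
    rw [Nat.cast_sub hle]
    have hcast : ((k + 4 * w - 1 : ℕ) : ℝ) = (k : ℝ) + 4 * (w : ℝ) - 1 := by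
      have : (k + 4 * w - 1) + 1 = k + 4 * w := by omega
      have h2 : ((k + 4 * w - 1 : ℕ) : ℝ) + 1 = (k : ℝ) + 4 * (w : ℝ) := by
        exact_mod_cast this
      linarith
    rw [hcast]
    push_cast
    ring
  · rw [uG hr 1 (by omega) (by omega) _ (2 * w + 1) (by omega) (by omega),
        uG hr 1 (by omega) (by omega) _ (2 * w) (by omega) (by omega)]
    have e1 : (2 * w + 1 - 1) / 2 = w := by omega
    have e2 : (2 * w + 1 + 1 - 1) / 2 = w := by omega
    rw [e1, e2, TT_reflO_at c w hw hw1 hk1 hV1]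
    have hle : TT c w ≤ k + 4 * w - 1 := by omega
    rw [Nat.cast_sub hle]
    have hcast : ((k + 4 * w - 1 : ℕ) : ℝ) = (k : ℝ) + 4 * (w : ℝ) - 1 := by
      have : (k + 4 * w - 1) + 1 = k + 4 * w := by omega
      have h2 : ((k + 4 * w - 1 : ℕ) : ℝ) + 1 = (k : ℝ) + 4 * (w : ℝ) := by
        exact_mod_cast this
      linarith
    rw [hcast]
    push_cast
    ring

lemma qdim_reflO_fix (hr : 4 ≤ r) (hk1 : 1 ≤ k) (hbr : 2 * b + 1 ≤ r) (c : Fin b → ℕ) (w : ℕ)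
    (hVE : validO k b c w) (hfix : reflO k c w = c) :
    qdimD r k (lamG 1 c) = 0 := by
  obtain ⟨hw1, hw, hV1, hV2⟩ := hVE
  have hfw := congrFun hfix ⟨w, hw⟩
  have e : reflO k c w ⟨w, hw⟩ = (k + 4 * w - 1) - TT c w - TT c (w + 1) := by
    simp [reflO]
  rw [e] at hfw
  have hdec : TT c w = c ⟨w, hw⟩ + TT c (w + 1) := TT_succ c w hw
  have h2t : 2 * TT c w + 1 = k + 4 * w := by omega
  apply qdim_zero hr _ (2 * w) (2 * w + 1) (by omega) (by omega) (by omega)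
  right
  rw [uG hr 1 (by omega) (by omega) _ (2 * w) (by omega) (by omega),
      uG hr 1 (by omega) (by omega) _ (2 * w + 1) (by omega) (by omega)]
  have e1 : (2 * w + 1 - 1) / 2 = w := by omega
  have e2 : (2 * w + 1 + 1 - 1) / 2 = w := by omega
  rw [e1, e2]
  have hcast : ((TT c w : ℝ)) + ((TT c w : ℝ)) + 1 = (k : ℝ) + 4 * (w : ℝ) := by
    exact_mod_cast (by omega : TT c w + TT c w + 1 = k + 4 * w)
  push_cast
  linarith

lemma odd_novalid (hr : 4 ≤ r) (hk : 1 ≤ k) (hb : 1 ≤ b) (hbr : 2 * b + 1 ≤ r)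
    (m j : ℕ) (hm : m = k + j) (hj1 : 1 ≤ j) (hj2 : j ≤ 2 * r - 3)
    (c : Fin b → ℕ) (hS : ∑ i, c i = m) (H : ∀ w, ¬ validO k b c w) :
    qdimD r k (lamG 1 c) = 0 := by
  have hS0 : TT c 0 = m := by rw [TT_total]; exact hS
  by_cases Hg : ∃ w, w < b ∧ TT c w + TT c (w + 1) ≤ k + 4 * w + 2
  · obtain ⟨W, ⟨hWb, hWle⟩, hmin⟩ :
        ∃ W, (W < b ∧ TT c W + TT c (W + 1) ≤ k + 4 * W + 2) ∧
          ∀ v, v < W → ¬ (v < b ∧ TT c v + TT c (v + 1) ≤ k + 4 * v + 2) :=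
      ⟨Nat.find Hg, Nat.find_spec Hg, fun v hv => Nat.find_min Hg hv⟩
    have hT1 : TT c 1 ≤ TT c 0 := TT_anti c 0 1 (by omega)
    have hW0bound : W = 0 → k + 1 ≤ TT c W + TT c (W + 1) := by
      intro h0; subst h0; omega
    rcases lt_or_ge (k + 4 * W) (TT c W + TT c (W + 1) + 1) with hgap | hval
    · -- σ_W ≥ k + 4W : gap collisions
      have h012 : TT c W + TT c (W + 1) = k + 4 * W ∨ TT c W + TT c (W + 1) = k + 4 * W + 1
          ∨ TT c W + TT c (W + 1) = k + 4 * W + 2 := by omega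
      have eW0 : (2 * W + 1 - 1) / 2 = W := by omega
      have eW1 : (2 * W + 1 + 1 - 1) / 2 = W := by omega
      have eW2 : (2 * W + 2 + 1 - 1) / 2 = W + 1 := by omega
      have eW3 : (2 * W + 3 + 1 - 1) / 2 = W + 1 := by omega
      rcases h012 with h0 | h1 | h2
      · -- needs W ≥ 1
        have hW1 : 1 ≤ W := by
          by_contra hcon
          have := hW0bound (by omega)
          omega
        apply qdim_zero hr _ (2 * W) (2 * W + 2) (by omega) (by omega) (by omega)
        right
        rw [uG hr 1 (by omega) (by omega) _ (2 * W) (by omega) (by omega),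
            uG hr 1 (by omega) (by omega) _ (2 * W + 2) (by omega) (by omega), eW0, eW2]
        have hcast : ((TT c W : ℝ)) + ((TT c (W + 1) : ℝ)) = (k : ℝ) + 4 * (W : ℝ) := by
          exact_mod_cast h0
        push_cast
        linarith
      · apply qdim_zero hr _ (2 * W + 1) (2 * W + 2) (by omega) (by omega) (by omega)
        right
        rw [uG hr 1 (by omega) (by omega) _ (2 * W + 1) (by omega) (by omega),
            uG hr 1 (by omega) (by omega) _ (2 * W + 2) (by omega) (by omega), eW1, eW2]
        have hcast : ((TT c W : ℝ)) + ((TT c (W + 1) : ℝ)) = (k : ℝ) + 4 * (W : ℝ) + 1 := by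
          exact_mod_cast h1
        push_cast
        linarith
      · apply qdim_zero hr _ (2 * W + 1) (2 * W + 3) (by omega) (by omega) (by omega)
        right
        rw [uG hr 1 (by omega) (by omega) _ (2 * W + 1) (by omega) (by omega),
            uG hr 1 (by omega) (by omega) _ (2 * W + 3) (by omega) (by omega), eW1, eW3]
        have hcast : ((TT c W : ℝ)) + ((TT c (W + 1) : ℝ)) = (k : ℝ) + 4 * (W : ℝ) + 2 := by
          exact_mod_cast h2
        push_cast
        linarith
    · -- σ_W ≤ k + 4W - 1 : valid at W, contradiction
      have hW1 : 1 ≤ W := by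
        by_contra hcon
        have := hW0bound (by omega)
        omega
      have hprevb : k + 4 * W ≤ TT c (W - 1) + TT c W + 1 := by
        have h1 := hmin (W - 1) (by omega)
        have h2 : ¬ (TT c (W - 1) + TT c (W - 1 + 1) ≤ k + 4 * (W - 1) + 2) := by
          intro hcon; exact h1 ⟨by omega, hcon⟩
        have he : W - 1 + 1 = W := by omega
        rw [he] at h2
        omega
      exact absurd ⟨hW1, hWb, by omega, hprevb⟩ (H W)
  · push_neg at Hg
    have ht : k + 4 * b - 1 ≤ TT c (b - 1) := by
      have h1 := Hg (b - 1) (by omega)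
      have h2 : TT c (b - 1 + 1) = 0 := by apply TT_zero; omega
      omega
    set t := TT c (b - 1) with htdef
    have htm : t ≤ m := by
      have := TT_anti c 0 (b - 1) (by omega)
      omega
    obtain ⟨p1, hp1⟩ : ∃ p1, p1 + 1 = 2 * b := ⟨2 * b - 1, by omega⟩
    have ep1 : (p1 + 1 - 1) / 2 = b - 1 := by omega
    rcases le_or_gt (t + 3) (k + r + 2 * b) with hcase | hcase
    · obtain ⟨p2, hp2⟩ : ∃ p2, p2 + k + 2 * b = t + 3 := ⟨t + 3 - (k + 2 * b), by omega⟩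
      have hz : TT c ((p2 + 1 - 1) / 2) = 0 := by apply TT_zero; omega
      apply qdim_zero hr _ p1 p2 (by omega) (by omega) (by omega)
      right
      rw [uG hr 1 (by omega) (by omega) _ p1 (by omega) (by omega),
          uG hr 1 (by omega) (by omega) _ p2 (by omega) (by omega), ep1, hz, ← htdef]
      have hc1 : ((p2 : ℝ)) + (k : ℝ) + 2 * (b : ℝ) = (t : ℝ) + 3 := by exact_mod_cast hp2
      have hc2 : ((p1 : ℝ)) + 1 = 2 * (b : ℝ) := by exact_mod_cast hp1
      push_cast
      linarith
    · obtain ⟨p2, hp2⟩ : ∃ p2, p2 + t + 3 = k + 2 * r + 2 * b := ⟨k + 2 * r + 2 * b - (t + 3), by omega⟩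
      have hz : TT c ((p2 + 1 - 1) / 2) = 0 := by apply TT_zero; omega
      apply qdim_zero hr _ p1 p2 (by omega) (by omega) (by omega)
      left
      rw [uG hr 1 (by omega) (by omega) _ p1 (by omega) (by omega),
          uG hr 1 (by omega) (by omega) _ p2 (by omega) (by omega), ep1, hz, ← htdef]
      have hc1 : ((p2 : ℝ)) + (t : ℝ) + 3 = (k : ℝ) + 2 * (r : ℝ) + 2 * (b : ℝ) := by
        exact_mod_cast hp2
      have hc2 : ((p1 : ℝ)) + 1 = 2 * (b : ℝ) := by exact_mod_cast hp1
      push_cast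
      linarith

lemma odd_main (hr : 4 ≤ r) (hk : 1 ≤ k) (hb : 1 ≤ b) (hbr : 2 * b + 1 ≤ r)
    (m j : ℕ) (hm : m = k + j) (hj1 : 1 ≤ j) (hj2 : j ≤ 2 * r - 3) :
    ∑ c ∈ (Fintype.piFinset (fun _ : Fin b => Finset.range (m + 1))).filter
        (fun c => ∑ i, c i = m), qdimD r k (lamG 1 c) = 0 := by
  have hmem : ∀ c : Fin b → ℕ,
      c ∈ (Fintype.piFinset (fun _ : Fin b => Finset.range (m + 1))).filter
        (fun c => ∑ i, c i = m) ↔ (∀ i, c i ≤ m) ∧ ∑ i, c i = m := by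
    intro c
    simp only [Finset.mem_filter, Fintype.mem_piFinset, Finset.mem_range, Nat.lt_succ_iff]
  classical
  apply Finset.sum_involution
    (g := fun c _ => if H : ∃ w, validO k b c w then reflO k c (Nat.find H) else c)
  · intro c hc
    by_cases H : ∃ w, validO k b c w
    · rw [dif_pos H, qdim_reflO_neg hr hk hbr c (Nat.find H) (Nat.find_spec H)]
      ring
    · rw [dif_neg H]
      push_neg at H
      have h0 : qdimD r k (lamG 1 c) = 0 :=
        odd_novalid hr hk hb hbr m j hm hj1 hj2 c ((hmem c).mp hc).2 (fun w => H w)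
      rw [h0]; norm_num
  · intro c hc hf
    by_cases H : ∃ w, validO k b c w
    · rw [dif_pos H]
      intro hfix
      exact hf (qdim_reflO_fix hr hk hbr c (Nat.find H) (Nat.find_spec H) hfix)
    · rw [dif_neg H]
      intro _
      push_neg at H
      exact hf (odd_novalid hr hk hb hbr m j hm hj1 hj2 c ((hmem c).mp hc).2 (fun w => H w))
  · intro c hc
    by_cases H : ∃ w, validO k b c w
    · rw [dif_pos H]
      obtain ⟨h1, h2⟩ := (hmem c).mp hc
      have := reflO_mem hk m c (Nat.find H) (Nat.find_spec H) h1 h2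
      exact (hmem _).mpr this
    · rw [dif_neg H]; exact hc
  · intro c hc
    by_cases H : ∃ w, validO k b c w
    · simp only [dif_pos H]
      have hVE := Nat.find_spec H
      have hVE' : validO k b (reflO k c (Nat.find H)) (Nat.find H) :=
        validO_reflO hk c (Nat.find H) hVE
      have H' : ∃ w, validO k b (reflO k c (Nat.find H)) w := ⟨Nat.find H, hVE'⟩
      rw [dif_pos H']
      have hfind : Nat.find H' = Nat.find H := by
        rw [Nat.find_eq_iff]
        exact ⟨hVE', validO_reflO_min hk c (Nat.find H) hVE (fun v hv => Nat.find_min H hv)⟩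
      rw [hfind, reflO_invol hk c (Nat.find H) hVE]
    · simp only [dif_neg H]


lemma caseR (hr : 4 ≤ r) (hk : 1 ≤ k) (j : ℕ) (hj1 : 1 ≤ j) (hj2 : j ≤ 2 * r - 3) :
    qdimD r k (fun q => if q = r then ((k + j : ℕ) : ℤ) else 0) = 0 := by
  set m : ℕ := k + j with hm
  have uR : ∀ p : ℕ, p ≤ r →
      uCoord r (fun q => if q = r then (m : ℤ) else 0) p = (m : ℝ) / 2 + ((r : ℝ) - (p : ℝ)) := by
    intro p hp
    by_cases hpr : p = r
    · subst hpr
      simp only [uCoord, if_pos rfl, if_true]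
      rw [if_neg (by omega : ¬ (p - 1 = p))]
      push_cast
      ring
    · simp only [uCoord, if_neg hpr, if_true]
      rw [Finset.sum_eq_zero (fun q hq => by
        simp only [Finset.mem_Icc] at hq
        rw [if_neg (by omega : ¬ (q = r))]
        norm_num)]
      rw [if_neg (by omega : ¬ (r - 1 = r))]
      push_cast
      ring
  rcases le_or_gt (j + 2) (r + 1) with hc | hc
  · apply qdim_zero hr _ 1 (j + 1) (by omega) (by omega) (by omega)
    right
    rw [uR 1 (by omega), uR (j + 1) (by omega)]
    push_cast [hm]
    ring_nf
  · obtain ⟨p1, hp1⟩ : ∃ p1, p1 + r = j + 2 := ⟨j + 2 - r, by omega⟩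
    apply qdim_zero hr _ p1 r (by omega) (by omega) (by omega)
    right
    rw [uR p1 (by omega), uR r (by omega)]
    have hc1 : ((p1 : ℝ)) + (r : ℝ) = (j : ℝ) + 2 := by exact_mod_cast hp1
    push_cast [hm]
    linarith

lemma caseRm1 (hr : 4 ≤ r) (hk : 1 ≤ k) (j : ℕ) (hj1 : 1 ≤ j) (hj2 : j ≤ 2 * r - 3) :
    qdimD r k (fun q => if q = r - 1 then ((k + j : ℕ) : ℤ) else 0) = 0 := by
  set m : ℕ := k + j with hm
  have uA : ∀ p : ℕ, 1 ≤ p → p ≤ r - 1 →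
      uCoord r (fun q => if q = r - 1 then (m : ℤ) else 0) p
        = (m : ℝ) / 2 + ((r : ℝ) - (p : ℝ)) := by
    intro p hp1 hp2
    simp only [uCoord, if_neg (by omega : ¬ (p = r)), if_true]
    rw [Finset.sum_eq_zero (fun q hq => by
      simp only [Finset.mem_Icc] at hq
      rw [if_neg (by omega : ¬ (q = r - 1))]
      norm_num)]
    rw [if_neg (by omega : ¬ (r = r - 1))]
    push_cast
    ring
  have uB : uCoord r (fun q => if q = r - 1 then (m : ℤ) else 0) r = -(m : ℝ) / 2 := by
    simp only [uCoord, if_pos rfl, if_true]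
    rw [if_neg (by omega : ¬ (r = r - 1))]
    push_cast
    ring
  rcases le_or_gt (j + 2) r with hc | hc
  · apply qdim_zero hr _ 1 (j + 1) (by omega) (by omega) (by omega)
    right
    rw [uA 1 (by omega) (by omega), uA (j + 1) (by omega) (by omega)]
    push_cast [hm]
    ring_nf
  · rcases le_or_gt (j + 5) (2 * r) with hc2 | hc2
    · obtain ⟨p1, hp1⟩ : ∃ p1, p1 + r = j + 3 := ⟨j + 3 - r, by omega⟩
      obtain ⟨p2, hp2⟩ : ∃ p2, p2 + 1 = r := ⟨r - 1, by omega⟩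
      apply qdim_zero hr _ p1 p2 (by omega) (by omega) (by omega)
      right
      rw [uA p1 (by omega) (by omega), uA p2 (by omega) (by omega)]
      have hc1 : ((p1 : ℝ)) + (r : ℝ) = (j : ℝ) + 3 := by exact_mod_cast hp1
      have hcc2 : ((p2 : ℝ)) + 1 = (r : ℝ) := by exact_mod_cast hp2
      push_cast [hm]
      linarith
    · obtain ⟨p1, hp1⟩ : ∃ p1, p1 + r = j + 2 := ⟨j + 2 - r, by omega⟩
      apply qdim_zero hr _ p1 r (by omega) (by omega) (by omega)
      left
      rw [uA p1 (by omega) (by omega), uB]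
      have hc1 : ((p1 : ℝ)) + (r : ℝ) = (j : ℝ) + 2 := by exact_mod_cast hp1
      push_cast [hm]
      linarith

end S15


/-- The quantum dimension solution of type `D_r` satisfies `z^{(a)}_{k+j} = 0` for all
`a ∈ I` and `1 ≤ j ≤ h - 1`, where `h = 2r - 2`. -/
theorem stmt15 (r k : ℕ) (hr : 4 ≤ r) (hk : 1 ≤ k)
    (a : ℕ) (ha : a ∈ Finset.Icc 1 r)
    (j : ℕ) (hj1 : 1 ≤ j) (hj2 : j ≤ 2 * r - 3) :
    zD r k a (k + j) = 0 := by
  rw [Finset.mem_Icc] at ha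
  unfold zD
  by_cases h1 : a = r - 1 ∨ a = r
  · rw [if_pos h1]
    rcases h1 with h | h
    · subst h; exact S15.caseRm1 hr hk j hj1 hj2
    · subst h; exact S15.caseR hr hk j hj1 hj2
  · rw [if_neg h1]
    push_neg at h1
    have ha2 : a ≤ r - 2 := by omega
    by_cases h2 : a % 2 = 1
    · rw [if_pos h2]
      exact S15.odd_main hr hk (by omega) (by omega) (k + j) j rfl hj1 hj2
    · rw [if_neg h2]
      exact S15.even_main hr hk (by omega) (by omega) (k + j) j rfl hj1 hj2
end

section
/- Let (Q^{(a)}_m) be a solution of the unrestricted Q-system of type D_r, with the convention Q^{(0)}_m = 1 for all m. Let 2 ≤ a ≤ r−2 and m ≥ 1. If Q^{(a−1)}_{m−1} = 0, Q^{(a)}_{m−1} = 0, Q^{(a−2)}_m = 1 and Q^{(a−1)}_m = 1, then Q^{(a)}_m = 1. -/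
/-- The adjacency matrix of the Dynkin diagram `D_r` on the index set `{1, …, r}`:
`A a b = 1` iff (`|a - b| = 1` and `a, b ≤ r - 1`) or `{a, b} = {r - 2, r}`. -/
def adjD (r a b : ℕ) : ℕ :=
  if ((a + 1 = b ∨ b + 1 = a) ∧ a ≤ r - 1 ∧ b ≤ r - 1)
      ∨ (a = r - 2 ∧ b = r) ∨ (a = r ∧ b = r - 2) then 1 else 0

/-- `Q : ℕ → ℕ → ℂ` is a solution of the unrestricted `Q`-system of type `D_r`:
`Q a 0 = 1` and `(Q a m)^2 = ∏_b (Q b m)^(A a b) + Q a (m-1) * Q a (m+1)`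
for all `a ∈ {1, …, r}` and `m ≥ 1`. -/
def IsUnresQSysD (r : ℕ) (Q : ℕ → ℕ → ℂ) : Prop :=
  (∀ a ∈ Finset.Icc 1 r, Q a 0 = 1) ∧
  ∀ a ∈ Finset.Icc 1 r, ∀ m : ℕ, 1 ≤ m →
    (Q a m) ^ 2 = (∏ b ∈ Finset.Icc 1 r, (Q b m) ^ adjD r a b) + Q a (m - 1) * Q a (m + 1)

/-- `Q` is a solution of the level-`k` restricted `Q`-system of type `D_r`:
`Q a 0 = 1`, `Q a k = 1`, and the `Q`-system recurrence holds for `1 ≤ m ≤ k - 1`. -/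
def IsResQSysD (r k : ℕ) (Q : ℕ → ℕ → ℂ) : Prop :=
  (∀ a ∈ Finset.Icc 1 r, Q a 0 = 1) ∧
  (∀ a ∈ Finset.Icc 1 r, Q a k = 1) ∧
  ∀ a ∈ Finset.Icc 1 r, ∀ m : ℕ, 1 ≤ m → m ≤ k - 1 →
    (Q a m) ^ 2 = (∏ b ∈ Finset.Icc 1 r, (Q b m) ^ adjD r a b) + Q a (m - 1) * Q a (m + 1)

lemma adjD_one (r a b : ℕ)
    (h : ((a + 1 = b ∨ b + 1 = a) ∧ a ≤ r - 1 ∧ b ≤ r - 1)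
      ∨ (a = r - 2 ∧ b = r) ∨ (a = r ∧ b = r - 2)) : adjD r a b = 1 := if_pos h

lemma adjD_zero (r a b : ℕ)
    (h : ¬(((a + 1 = b ∨ b + 1 = a) ∧ a ≤ r - 1 ∧ b ≤ r - 1)
      ∨ (a = r - 2 ∧ b = r) ∨ (a = r ∧ b = r - 2))) : adjD r a b = 0 := if_neg h

/-- For a solution of the unrestricted `Q`-system of type `D_r` (with the convention
`Q 0 m = 1`), if `2 ≤ a ≤ r-2`, `m ≥ 1`, `Q (a-1) (m-1) = 0`, `Q a (m-1) = 0`,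
`Q (a-2) m = 1` and `Q (a-1) m = 1`, then `Q a m = 1`. -/
theorem stmt16 (r : ℕ) (hr : 4 ≤ r) (Q : ℕ → ℕ → ℂ) (hQ : IsUnresQSysD r Q)
    (a m : ℕ) (ha2 : 2 ≤ a) (har : a ≤ r - 2) (hm : 1 ≤ m)
    (h1 : Q (a - 1) (m - 1) = 0) (h2 : Q a (m - 1) = 0)
    (h3 : a = 2 ∨ Q (a - 2) m = 1) (h4 : Q (a - 1) m = 1) :
    Q a m = 1 := by
  have hmem : a - 1 ∈ Finset.Icc 1 r := Finset.mem_Icc.mpr ⟨by omega, by omega⟩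
  have heq := hQ.2 (a - 1) hmem m hm
  rw [h1, h4, zero_mul, add_zero, one_pow] at heq
  by_cases h0 : a = 2
  · subst h0
    have hp : ∏ b ∈ Finset.Icc 1 r, Q b m ^ adjD r (2 - 1) b = Q 2 m := by
      rw [Finset.prod_eq_single_of_mem 2 (Finset.mem_Icc.mpr ⟨by omega, by omega⟩)]
      · rw [adjD_one r (2-1) 2 (by omega), pow_one]
      · intro b hb hne
        have hb' := Finset.mem_Icc.mp hb
        rw [adjD_zero r (2-1) b (by omega), pow_zero]
    rw [hp] at heq
    exact heq.symm
  · have h3' : Q (a - 2) m = 1 := h3.resolve_left h0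
    have hne : a - 2 ≠ a := by omega
    have hp : ∏ b ∈ Finset.Icc 1 r, Q b m ^ adjD r (a - 1) b
        = Q (a - 2) m * Q a m := by
      rw [← Finset.prod_subset (s₁ := {a - 2, a})
          (by intro b hb; simp only [Finset.mem_insert, Finset.mem_singleton] at hb
              exact Finset.mem_Icc.mpr (by omega))
          (fun b hb hb' => by
            simp only [Finset.mem_insert, Finset.mem_singleton, not_or] at hb'
            have hbmem := Finset.mem_Icc.mp hb
            rw [adjD_zero r (a-1) b (by omega), pow_zero])]
      rw [Finset.prod_insert (by simpa using hne), Finset.prod_singleton,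
        adjD_one r (a-1) (a-2) (by omega), adjD_one r (a-1) a (by omega),
        pow_one, pow_one]
    rw [hp, h3', one_mul] at heq
    exact heq.symm
end

section
/- The level-k quantum dimensions of the spin-node weights of D_r satisfy D((k+h)ω_{r−1}) = D((k+h)ω_r) = 1 if r ≡ 0 or 1 (mod 4), and D((k+h)ω_{r−1}) = D((k+h)ω_r) = −1 if r ≡ 2 or 3 (mod 4); equivalently, D((k+h)ω_{r−1}) = D((k+h)ω_r) = (−1)^{r(r−1)/2}. -/
private lemma filter_card_eq (r : ℕ) :
    ((Finset.Icc 1 r ×ˢ Finset.Icc 1 r).filter (fun p => p.1 < p.2)).card = r * (r - 1) / 2 := by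
  rw [Finset.card_filter, Finset.sum_product]
  have h1 : ∀ a ∈ Finset.Icc 1 r,
      (∑ b ∈ Finset.Icc 1 r, if a < b then 1 else 0) = r - a := by
    intro a _
    rw [← Finset.card_filter]
    have : (Finset.Icc 1 r).filter (fun b => a < b) = Finset.Icc (a+1) r := by
      ext b; simp only [Finset.mem_filter, Finset.mem_Icc]; omega
    rw [this, Nat.card_Icc]
    omega
  rw [Finset.sum_congr rfl h1, ← Finset.Ico_add_one_right_eq_Icc, Finset.sum_Ico_eq_sum_range]
  have h2 : ∀ i ∈ Finset.range (r + 1 - 1), r - (1 + i) = r - 1 - i := by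
    intro i _; omega
  rw [Finset.sum_congr rfl h2]
  have h3 : r + 1 - 1 = r := by omega
  rw [h3]
  have h4 := Finset.sum_range_reflect (fun j => j) r
  rw [h4, Finset.sum_range_id]

private lemma sin_ne (N m : ℝ) (hN : 0 < N) (hm : 0 < m) (hmN : m < N) :
    Real.sin (Real.pi * m / N) ≠ 0 := by
  have h1 : 0 < Real.pi * m / N := by positivity
  have h2 : Real.pi * m / N < Real.pi := by
    rw [mul_div_assoc]
    calc Real.pi * (m / N) < Real.pi * 1 :=
          mul_lt_mul_of_pos_left ((div_lt_one hN).2 hmN) Real.pi_pos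
      _ = Real.pi := mul_one _
  exact ne_of_gt (Real.sin_pos_of_pos_of_lt_pi h1 h2)

private lemma sin_shift (N m : ℝ) (hN : N ≠ 0) :
    Real.sin (Real.pi * (N + m) / N) = - Real.sin (Real.pi * m / N) := by
  have h : Real.pi * (N + m) / N = Real.pi * m / N + Real.pi := by field_simp; ring
  rw [h, Real.sin_add_pi]


/-- The level-`k` quantum dimensions of the spin-node weights `(k+h)ω_{r-1}` and
`(k+h)ω_r` of `D_r` both equal `(-1)^{r(r-1)/2}`, i.e. `1` if `r ≡ 0, 1 (mod 4)`
and `-1` if `r ≡ 2, 3 (mod 4)`. -/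
theorem stmt18 (r k : ℕ) (hr : 4 ≤ r) (hk : 1 ≤ k) :
    qdimD r k (fun j => if j = r - 1 then ((k + 2 * r - 2 : ℕ) : ℤ) else 0)
        = (-1 : ℝ) ^ (r * (r - 1) / 2) ∧
    qdimD r k (fun j => if j = r then ((k + 2 * r - 2 : ℕ) : ℤ) else 0)
        = (-1 : ℝ) ^ (r * (r - 1) / 2) := by
  set N : ℝ := 2 * (r : ℝ) - 2 + (k : ℝ) with hNdef
  have hrR : (4 : ℝ) ≤ (r : ℝ) := by exact_mod_cast hr
  have hkR : (1 : ℝ) ≤ (k : ℝ) := by exact_mod_cast hk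
  have hN : 0 < N := by rw [hNdef]; linarith
  have hNne : N ≠ 0 := ne_of_gt hN
  have hcast : (((k + 2 * r - 2 : ℕ) : ℤ) : ℝ) = N := by
    rw [hNdef]
    have h2 : 2 ≤ k + 2 * r := by omega
    push_cast [Nat.cast_sub h2]
    ring
  have hne1 : ¬(r - 1 = r) := by omega
  have hne2 : ¬(r = r - 1) := by omega
  -- uCoord values for the weight (k+h)ω_r
  have uA : ∀ i, 1 ≤ i → i ≤ r →
      uCoord r (fun j => if j = r then ((k + 2 * r - 2 : ℕ) : ℤ) else 0) i
        = N / 2 + ((r : ℝ) - (i : ℝ)) := by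
    intro i hi1 hir
    by_cases hi : i = r
    · subst hi
      simp only [uCoord, eq_self_iff_true, if_true, if_neg hne1]
      rw [hcast]
      push_cast
      ring
    · simp only [uCoord, if_neg hi, if_neg hne1, eq_self_iff_true, if_true]
      have hsum : (∑ j ∈ Finset.Icc i (r - 2),
          (((if j = r then ((k + 2 * r - 2 : ℕ) : ℤ) else 0) : ℤ) : ℝ)) = 0 := by
        apply Finset.sum_eq_zero
        intro j hj
        rw [Finset.mem_Icc] at hj
        rw [if_neg (by omega : ¬(j = r))]
        norm_num
      rw [hsum, hcast]
      push_cast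
      ring
  -- uCoord values for the weight (k+h)ω_{r-1}
  have uB1 : ∀ i, 1 ≤ i → i ≤ r - 1 →
      uCoord r (fun j => if j = r - 1 then ((k + 2 * r - 2 : ℕ) : ℤ) else 0) i
        = N / 2 + ((r : ℝ) - (i : ℝ)) := by
    intro i hi1 hir
    simp only [uCoord, if_neg (by omega : ¬(i = r)), eq_self_iff_true, if_true, if_neg hne2]
    have hsum : (∑ j ∈ Finset.Icc i (r - 2),
        (((if j = r - 1 then ((k + 2 * r - 2 : ℕ) : ℤ) else 0) : ℤ) : ℝ)) = 0 := by
      apply Finset.sum_eq_zero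
      intro j hj
      rw [Finset.mem_Icc] at hj
      rw [if_neg (by omega : ¬(j = r - 1))]
      norm_num
    rw [hsum, hcast]
    push_cast
    ring
  have uB2 : uCoord r (fun j => if j = r - 1 then ((k + 2 * r - 2 : ℕ) : ℤ) else 0) r
      = -(N / 2) := by
    simp only [uCoord, eq_self_iff_true, if_true, if_neg hne2]
    rw [hcast]
    push_cast
    ring
  constructor
  · -- (k+h)ω_{r-1}
    unfold qdimD
    rw [← filter_card_eq r, ← Finset.prod_const]
    apply Finset.prod_congr rfl
    intro p hp
    simp only [Finset.mem_filter, Finset.mem_product, Finset.mem_Icc] at hp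
    obtain ⟨⟨⟨hi1, hir⟩, hj1, hjr⟩, hij⟩ := hp
    obtain ⟨i, j⟩ := p
    simp only at hi1 hir hj1 hjr hij ⊢
    rw [← hNdef]
    have hiR : (i : ℝ) < (j : ℝ) := by exact_mod_cast hij
    have hi1R : (1 : ℝ) ≤ (i : ℝ) := by exact_mod_cast hi1
    have hjrR : (j : ℝ) ≤ (r : ℝ) := by exact_mod_cast hjr
    by_cases hjr' : j = r
    · rw [hjr']
      rw [uB1 i hi1 (by omega), uB2]
      have hiR' : (i : ℝ) < (r : ℝ) := by exact_mod_cast (show i < r by omega)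
      have ha : (0:ℝ) < (r : ℝ) - (i : ℝ) := by linarith
      have ha' : (r : ℝ) - (i : ℝ) < N := by rw [hNdef]; linarith
      have e1 : N / 2 + ((r:ℝ) - i) - -(N/2) = N + ((r:ℝ) - i) := by ring
      have e2 : N / 2 + ((r:ℝ) - i) + -(N/2) = (r:ℝ) - i := by ring
      have e3 : 2 * (r:ℝ) - (i:ℝ) - (r:ℝ) = (r:ℝ) - i := by ring
      rw [e1, e2, e3, sin_shift N _ hNne]
      have hs := sin_ne N _ hN ha ha'
      rw [div_eq_iff (mul_ne_zero hs hs)]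
      ring
    · rw [uB1 i hi1 (by omega), uB1 j hj1 (by omega)]
      have hjR' : (j : ℝ) < (r : ℝ) := by exact_mod_cast (show j < r by omega)
      have ha : (0:ℝ) < (j:ℝ) - i := by linarith
      have ha' : (j:ℝ) - (i:ℝ) < N := by rw [hNdef]; linarith
      have hb : (0:ℝ) < 2 * (r:ℝ) - i - j := by linarith
      have hb' : 2 * (r:ℝ) - (i:ℝ) - (j:ℝ) < N := by rw [hNdef]; linarith
      have e1 : N / 2 + ((r:ℝ) - i) - (N / 2 + ((r:ℝ) - j)) = (j:ℝ) - i := by ring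
      have e2 : N / 2 + ((r:ℝ) - i) + (N / 2 + ((r:ℝ) - j)) = N + (2 * (r:ℝ) - i - j) := by
        rw [hNdef]; ring
      rw [e1, e2, sin_shift N _ hNne]
      have hs1 := sin_ne N _ hN ha ha'
      have hs2 := sin_ne N _ hN hb hb'
      rw [div_eq_iff (mul_ne_zero hs1 hs2)]
      ring
  · -- (k+h)ω_r
    unfold qdimD
    rw [← filter_card_eq r, ← Finset.prod_const]
    apply Finset.prod_congr rfl
    intro p hp
    simp only [Finset.mem_filter, Finset.mem_product, Finset.mem_Icc] at hp
    obtain ⟨⟨⟨hi1, hir⟩, hj1, hjr⟩, hij⟩ := hp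
    obtain ⟨i, j⟩ := p
    simp only at hi1 hir hj1 hjr hij ⊢
    rw [← hNdef]
    have hiR : (i : ℝ) < (j : ℝ) := by exact_mod_cast hij
    have hi1R : (1 : ℝ) ≤ (i : ℝ) := by exact_mod_cast hi1
    have hjrR : (j : ℝ) ≤ (r : ℝ) := by exact_mod_cast hjr
    rw [uA i hi1 (by omega), uA j hj1 hjr]
    have ha : (0:ℝ) < (j:ℝ) - i := by linarith
    have ha' : (j:ℝ) - (i:ℝ) < N := by rw [hNdef]; linarith
    have hb : (0:ℝ) < 2 * (r:ℝ) - i - j := by linarith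
    have hb' : 2 * (r:ℝ) - (i:ℝ) - (j:ℝ) < N := by rw [hNdef]; linarith
    have e1 : N / 2 + ((r:ℝ) - i) - (N / 2 + ((r:ℝ) - j)) = (j:ℝ) - i := by ring
    have e2 : N / 2 + ((r:ℝ) - i) + (N / 2 + ((r:ℝ) - j)) = N + (2 * (r:ℝ) - i - j) := by
      rw [hNdef]; ring
    rw [e1, e2, sin_shift N _ hNne]
    have hs1 := sin_ne N _ hN ha ha'
    have hs2 := sin_ne N _ hN hb hb'
    rw [div_eq_iff (mul_ne_zero hs1 hs2)]
    ring
end
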